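/- Let F be a cubic form with real coefficients in s variables, let E > 0, let C > 0, and let n ≥ 2 be an integer. There exists N_0 > 0 (depending on E, C and F) such that for every N ≥ N_0 the following holds: if x_1, …, x_n ∈ ℤ^s \ {0} are linearly dependent over ℝ and satisfy, for every u ∈ ℝ^n, |F(u_1 x_1 + … + u_n x_n) − Σ_{i≤n} F(x_i) u_i^3| ≤ C · N^{−E} · |u|^3, then F takes small values. -/
import Mathlib


open MvPolynomial

/-- `F` takes small values: there is a nonzero integer vector `x` with `|F(x)| < 1`. -/
def TakesSmallValues {s : ℕ} (F : MvPolynomial (Fin s) ℝ) : Prop :=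
  ∃ x : Fin s → ℤ, x ≠ 0 ∧ |eval (fun i => (x i : ℝ)) F| < 1

/-- `F` splits into `r` parts of dimensions `a 0, …, a (r-1)`: it is a sum of nonzero
cubic forms `C j`, the `j`-th of which involves only the block of `a j` consecutive
variables starting at position `a 0 + ⋯ + a (j-1)`. -/
def SplitsIntoParts {s : ℕ} (F : MvPolynomial (Fin s) ℝ) (r : ℕ) (a : Fin r → ℕ) : Prop :=
  (∀ j, 0 < a j) ∧ (∑ j, a j = s) ∧
    ∃ C : Fin r → MvPolynomial (Fin s) ℝ,
      (∀ j, C j ≠ 0) ∧ (∀ j, (C j).IsHomogeneous 3) ∧ F = ∑ j, C j ∧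
      ∀ j : Fin r, ∀ i ∈ (C j).vars,
        (∑ k ∈ Finset.univ.filter (fun k => k < j), a k) ≤ (i : ℕ) ∧
          (i : ℕ) < ∑ k ∈ Finset.univ.filter (fun k => k ≤ j), a k

/-- `F` splits into `r` parts. -/
def SplitsInto {s : ℕ} (F : MvPolynomial (Fin s) ℝ) (r : ℕ) : Prop :=
  ∃ a : Fin r → ℕ, SplitsIntoParts F r a

theorem trick_linear_dependence {s : ℕ} (F : MvPolynomial (Fin s) ℝ)
    (hF : F.IsHomogeneous 3) (E C : ℝ) (hE : 0 < E) (hC : 0 < C)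
    (n : ℕ) (hn : 2 ≤ n) :
    ∃ N₀ : ℝ, 0 < N₀ ∧ ∀ N : ℝ, N₀ ≤ N →
      ∀ x : Fin n → Fin s → ℤ, (∀ j, x j ≠ 0) →
        ¬ LinearIndependent ℝ (fun j : Fin n => fun i : Fin s => (x j i : ℝ)) →
        (∀ u : Fin n → ℝ,
          |eval (fun i => ∑ j, u j * (x j i : ℝ)) F
              - ∑ j, eval (fun i => (x j i : ℝ)) F * u j ^ 3|
            ≤ C * N ^ (-E) * ‖u‖ ^ 3) →
        TakesSmallValues F := by
  refine ⟨max 1 ((2*C) ^ (1/E)), lt_of_lt_of_le one_pos (le_max_left _ _), ?_⟩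
  intro N hN x hx hdep hbound
  have h2C : (0:ℝ) < 2 * C := by linarith
  have hδ0 : 0 ≤ C * N ^ (-E) := by
    have : (0:ℝ) < N := lt_of_lt_of_le (lt_of_lt_of_le one_pos (le_max_left _ _)) hN
    positivity
  have hδ : C * N ^ (-E) ≤ 1/2 := by
    have h1 : N ^ (-E) ≤ ((2*C) ^ (1/E)) ^ (-E) :=
      Real.rpow_le_rpow_of_nonpos (Real.rpow_pos_of_pos h2C _)
        (le_trans (le_max_right _ _) hN) (by linarith)
    have h2 : ((2*C) ^ (1/E)) ^ (-E) = (2*C)⁻¹ := by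
      rw [← Real.rpow_mul h2C.le, one_div, inv_mul_eq_div, neg_div,
        div_self hE.ne', Real.rpow_neg_one]
    rw [h2] at h1
    calc C * N ^ (-E) ≤ C * (2*C)⁻¹ := by
          exact mul_le_mul_of_nonneg_left h1 hC.le
      _ = 1/2 := by field_simp
  -- extract a dependence relation
  rw [Fintype.not_linearIndependent_iff] at hdep
  obtain ⟨g, hg0, i₀, hgi₀⟩ := hdep
  obtain ⟨j₀, -, hj₀⟩ := Finset.exists_max_image Finset.univ (fun j => |g j|)
    ⟨i₀, Finset.mem_univ i₀⟩
  have hgj₀ : g j₀ ≠ 0 := by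
    intro h
    have := hj₀ i₀ (Finset.mem_univ _)
    rw [h, abs_zero] at this
    exact hgi₀ (abs_eq_zero.mp (le_antisymm this (abs_nonneg _)))
  set w : Fin n → ℝ := fun j => g j / g j₀ with hwdef
  have hw1 : ∀ j, |w j| ≤ 1 := by
    intro j
    rw [hwdef, abs_div, div_le_one (abs_pos.mpr hgj₀)]
    exact hj₀ j (Finset.mem_univ _)
  have hwj₀ : w j₀ = 1 := div_self hgj₀
  have hsum : ∀ i, ∑ j, w j * (x j i : ℝ) = 0 := by
    intro i
    have h := congrFun hg0 i
    simp only [Finset.sum_apply, Pi.smul_apply, smul_eq_mul, Pi.zero_apply] at h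
    have : ∑ j, w j * (x j i : ℝ) = (∑ j, g j * (x j i : ℝ)) / g j₀ := by
      rw [Finset.sum_div]
      exact Finset.sum_congr rfl fun j _ => by rw [hwdef]; ring
    rw [this, h, zero_div]
  -- F(0) = 0
  have hF0 : eval (fun _ : Fin s => (0:ℝ)) F = 0 := by
    have : eval (fun _ : Fin s => (0:ℝ)) F = constantCoeff F := by
      rw [← eval_zero']
    rw [this, constantCoeff_eq]
    exact hF.coeff_eq_zero (by simp [Finsupp.degree])
  set Fx : Fin n → ℝ := fun j => eval (fun i => (x j i : ℝ)) F with hFxdef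
  set S : ℝ := ∑ j, Fx j * w j ^ 3 with hSdef
  -- first application: at u = w
  have h1 : |S| ≤ C * N ^ (-E) := by
    have hb := hbound w
    have heq : (fun i => ∑ j, w j * (x j i : ℝ)) = fun _ => (0:ℝ) :=
      funext fun i => hsum i
    rw [heq, hF0, zero_sub, abs_neg] at hb
    have hwn : ‖w‖ ≤ 1 := (pi_norm_le_iff_of_nonneg zero_le_one).mpr
      fun j => by simpa using hw1 j
    calc |S| ≤ C * N ^ (-E) * ‖w‖ ^ 3 := hb
      _ ≤ C * N ^ (-E) * 1 := by
          apply mul_le_mul_of_nonneg_left _ hδ0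
          calc ‖w‖ ^ 3 ≤ 1 ^ 3 := pow_le_pow_left₀ (norm_nonneg _) hwn 3
            _ = 1 := one_pow 3
      _ = C * N ^ (-E) := mul_one _
  -- second application: at u = w + e_{j₀}
  set w' : Fin n → ℝ := fun j => w j + if j = j₀ then 1 else 0 with hw'def
  have hsum' : ∀ i, ∑ j, w' j * (x j i : ℝ) = (x j₀ i : ℝ) := by
    intro i
    have : ∀ j, w' j * (x j i : ℝ)
        = w j * (x j i : ℝ) + (if j = j₀ then (x j₀ i : ℝ) else 0) := by
      intro j
      by_cases h : j = j₀ <;> simp [hw'def, h] <;> ring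
    rw [Finset.sum_congr rfl fun j _ => this j, Finset.sum_add_distrib, hsum i,
      Finset.sum_ite_eq' Finset.univ j₀ (fun _ => (x j₀ i : ℝ))]
    simp
  have hS' : ∑ j, Fx j * w' j ^ 3 = S + 7 * Fx j₀ := by
    have : ∀ j, Fx j * w' j ^ 3
        = Fx j * w j ^ 3 + (if j = j₀ then 7 * Fx j₀ else 0) := by
      intro j
      by_cases h : j = j₀
      · subst h; simp [hw'def, hwj₀]; ring
      · simp [hw'def, h]
    rw [Finset.sum_congr rfl fun j _ => this j, Finset.sum_add_distrib,
      Finset.sum_ite_eq' Finset.univ j₀ (fun _ => 7 * Fx j₀)]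
    simp [hSdef]
  have h2 : |Fx j₀ - (S + 7 * Fx j₀)| ≤ 8 * (C * N ^ (-E)) := by
    have hb := hbound w'
    have heq : (fun i => ∑ j, w' j * (x j i : ℝ)) = fun i => (x j₀ i : ℝ) :=
      funext fun i => hsum' i
    rw [heq, hS'] at hb
    have hwn : ‖w'‖ ≤ 2 := (pi_norm_le_iff_of_nonneg (by norm_num)).mpr fun j => by
      have := hw1 j
      by_cases h : j = j₀ <;> simp only [hw'def, h, if_true, if_false, Real.norm_eq_abs]
      · calc |w j₀ + 1| ≤ |w j₀| + |(1:ℝ)| := abs_add_le _ _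
          _ ≤ 1 + 1 := by have := hw1 j₀; simp at this ⊢; linarith
          _ = 2 := by norm_num
      · simpa using le_trans this (by norm_num)
    calc |Fx j₀ - (S + 7 * Fx j₀)| ≤ C * N ^ (-E) * ‖w'‖ ^ 3 := hb
      _ ≤ C * N ^ (-E) * 2 ^ 3 := by
          apply mul_le_mul_of_nonneg_left _ hδ0
          exact pow_le_pow_left₀ (norm_nonneg _) hwn 3
      _ = 8 * (C * N ^ (-E)) := by ring
  -- combine
  refine ⟨x j₀, hx j₀, ?_⟩
  have h6 : |6 * Fx j₀| ≤ 9 * (C * N ^ (-E)) := by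
    have : (6:ℝ) * Fx j₀ = -(Fx j₀ - (S + 7 * Fx j₀)) - S := by ring
    rw [this]
    calc |-(Fx j₀ - (S + 7 * Fx j₀)) - S|
        ≤ |-(Fx j₀ - (S + 7 * Fx j₀))| + |S| := abs_sub _ _
      _ = |Fx j₀ - (S + 7 * Fx j₀)| + |S| := by rw [abs_neg]
      _ ≤ 8 * (C * N ^ (-E)) + C * N ^ (-E) := add_le_add h2 h1
      _ = 9 * (C * N ^ (-E)) := by ring
  rw [abs_mul, abs_of_nonneg (by norm_num : (0:ℝ) ≤ 6)] at h6
  show |Fx j₀| < 1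
  nlinarith [abs_nonneg (Fx j₀)]
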